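/- arXiv:2305.18440 — 3 statements merged into one kernel-verified Lean document; each statement's English description precedes it below -/
import Mathlib

section
/- Let f : ℝ^M → ℝ be continuously differentiable and let P be a probability measure on ℝ^M such that f is P-integrable and x⁰ ↦ IG_i(x^t | x⁰) is P-integrable for every i. Then the expected integrated gradients satisfy the sum rule: Σ_{i=1}^M EIG_i(x^t) = f(x^t) − ∫ f dP. -/
open MeasureTheory Finset

/-- Partial derivative of `f : ℝ^M → ℝ` with respect to the `i`-th coordinate. -/
noncomputable def partialDeriv' {M : ℕ} (f : (Fin M → ℝ) → ℝ) (i : Fin M) (x : Fin M → ℝ) : ℝ :=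
  fderiv ℝ f x (Pi.single i 1)

/-- Integrated gradient of `f` at test point `xt` with baseline `x0`, coordinate `i`. -/
noncomputable def IG {M : ℕ} (f : (Fin M → ℝ) → ℝ) (xt x0 : Fin M → ℝ) (i : Fin M) : ℝ :=
  (xt i - x0 i) * ∫ α in (0:ℝ)..1, partialDeriv' f i (x0 + α • (xt - x0))

/-- Expected integrated gradient of `f` with respect to a measure `P` on the baselines. -/
noncomputable def EIG {M : ℕ} (f : (Fin M → ℝ) → ℝ) (P : Measure (Fin M → ℝ))
    (xt : Fin M → ℝ) (i : Fin M) : ℝ :=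
  ∫ x0, IG f xt x0 i ∂P

/-! Along the segment `γ α = x⁰ + α • (xᵗ - x⁰)` the chain rule gives
`(f ∘ γ)' α = ∑ i, (xᵗ i - x⁰ i) * ∂ᵢ f (γ α)`, so by the fundamental theorem of calculus the
integrated gradients of a single baseline sum to `f xᵗ - f x⁰`. Integrating this identity against
the probability measure `P` gives the sum rule. -/

theorem fderiv_apply_eq_sum_partialDeriv' {M : ℕ} (f : (Fin M → ℝ) → ℝ) (x v : Fin M → ℝ) :
    fderiv ℝ f x v = ∑ i, v i * partialDeriv' f i x := by
  conv_lhs => rw [← univ_sum_single v]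
  simp only [map_sum, partialDeriv']
  refine sum_congr rfl fun i _ => ?_
  rw [← smul_eq_mul, ← map_smul, ← Pi.single_smul, smul_eq_mul, mul_one]

theorem continuous_partialDeriv' {M : ℕ} {f : (Fin M → ℝ) → ℝ} (hf : ContDiff ℝ 1 f)
    (i : Fin M) : Continuous (partialDeriv' f i) :=
  (hf.continuous_fderiv one_ne_zero).clm_apply continuous_const

theorem ContDiff.integral_fderiv_segment_eq_sub {E F : Type*} [NormedAddCommGroup E]
    [NormedSpace ℝ E] [NormedAddCommGroup F] [NormedSpace ℝ F] [CompleteSpace F]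
    {f : E → F} (hf : ContDiff ℝ 1 f) (x y : E) :
    ∫ t in (0 : ℝ)..1, fderiv ℝ f (x + t • (y - x)) (y - x) = f y - f x := by
  have hpath (t : ℝ) : HasDerivAt (fun s : ℝ => x + s • (y - x)) (y - x) t := by
    simpa using ((hasDerivAt_id t).smul_const (y - x)).const_add x
  have hderiv (t : ℝ) : HasDerivAt (fun s : ℝ => f (x + s • (y - x)))
      (fderiv ℝ f (x + t • (y - x)) (y - x)) t :=
    ((hf.differentiable one_ne_zero _).hasFDerivAt).comp_hasDerivAt t (hpath t)
  have hcont : Continuous fun t : ℝ => fderiv ℝ f (x + t • (y - x)) (y - x) :=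
    ((hf.continuous_fderiv one_ne_zero).comp (by fun_prop)).clm_apply continuous_const
  rw [intervalIntegral.integral_eq_sub_of_hasDerivAt (fun t _ => hderiv t)
    (hcont.intervalIntegrable 0 1)]
  simp

theorem sum_IG_eq_sub {M : ℕ} {f : (Fin M → ℝ) → ℝ} (hf : ContDiff ℝ 1 f) (xt x0 : Fin M → ℝ) :
    ∑ i, IG f xt x0 i = f xt - f x0 := by
  have hint (i : Fin M) : IntervalIntegrable
      (fun t : ℝ => partialDeriv' f i (x0 + t • (xt - x0))) volume 0 1 :=
    ((continuous_partialDeriv' hf i).comp (by fun_prop)).intervalIntegrable 0 1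
  calc ∑ i, IG f xt x0 i
      = ∫ t in (0 : ℝ)..1, ∑ i, (xt - x0) i * partialDeriv' f i (x0 + t • (xt - x0)) := by
        rw [intervalIntegral.integral_finsetSum fun i _ => (hint i).const_mul _]
        simp only [intervalIntegral.integral_const_mul, IG, Pi.sub_apply]
    _ = ∫ t in (0 : ℝ)..1, fderiv ℝ f (x0 + t • (xt - x0)) (xt - x0) := by
        simp only [fderiv_apply_eq_sum_partialDeriv']
    _ = f xt - f x0 := hf.integral_fderiv_segment_eq_sub x0 xt

/-- sum rule for expected integrated gradients:
`Σ_i EIG_i(x^t) = f(x^t) − ∫ f dP`. -/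
theorem eig_sum_rule {M : ℕ} (f : (Fin M → ℝ) → ℝ) (hf : ContDiff ℝ 1 f)
    (P : Measure (Fin M → ℝ)) [IsProbabilityMeasure P]
    (hfint : Integrable f P) (xt : Fin M → ℝ)
    (hint : ∀ i : Fin M, Integrable (fun x0 => IG f xt x0 i) P) :
    ∑ i : Fin M, EIG f P xt i = f xt - ∫ x, f x ∂P := by
  calc ∑ i, EIG f P xt i = ∫ x0, ∑ i, IG f xt x0 i ∂P :=
        (integral_finsetSum _ fun i _ => hint i).symm
    _ = ∫ x0, (f xt - f x0) ∂P := by simp only [sum_IG_eq_sub hf]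
    _ = f xt - ∫ x, f x ∂P := by
        rw [integral_sub (integrable_const _) hfint, integral_const, probReal_univ, one_smul]
end

section
/- Let f(x) = c + bᵀx + ½ xᵀA x be a quadratic polynomial on ℝ^M with A symmetric, and let P be a probability measure on ℝ^M with finite second moments. Writing Δ = x^t − x for x distributed according to P and ⟨·⟩ for expectation under P, the Shapley value admits the exact closed form SV_i(x^t) = ⟨Δ_i⟩ · ∂f(x^t)/∂x_i − ½ Σ_{k=1}^M ⟨Δ_i Δ_k⟩ · A_{ik} for every i, where ∂f(x^t)/∂x_i = b_i + (A x^t)_i and A_{ik} = ∂²f/∂x_i∂x_k. -/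
/-!
Adding feature `i` to a coalition `S` moves the evaluation point by `Δᵢ eᵢ`, so for a quadratic `f`
the marginal contribution is, pointwise in `x`,
`Δᵢ ∂ᵢf(xᵗ) - ½ Δᵢ² Aᵢᵢ - ∑_{k ∉ S ∪ {i}} Δᵢ Δₖ Aᵢₖ`.
After integration it is affine in the indicators `[k ∉ S]`, and the Shapley weights average a
constant to itself and each indicator `[k ∉ S]`, `k ≠ i`, to `½`
(because `∑ₖ C(M-2,k) / C(M-1,k) = M / 2`).
-/

open MeasureTheory Finset

/-- Substituted input: coordinates in `T` are clamped to the test point `xt`. -/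
def subst {M : ℕ} (xt x : Fin M → ℝ) (T : Finset (Fin M)) : Fin M → ℝ :=
  fun j => if j ∈ T then xt j else x j

/-- Conditional expectation `⟨f | x_T^t⟩ = ∫ f(z) dP(x)` with `z_j = x_j^t` for `j ∈ T`. -/
noncomputable def condSub {M : ℕ} (f : (Fin M → ℝ) → ℝ) (P : Measure (Fin M → ℝ))
    (xt : Fin M → ℝ) (T : Finset (Fin M)) : ℝ :=
  ∫ x, f (subst xt x T) ∂P

/-- Shapley value of feature `i` for `f` at test point `xt`. -/
noncomputable def SV {M : ℕ} (f : (Fin M → ℝ) → ℝ) (P : Measure (Fin M → ℝ))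
    (xt : Fin M → ℝ) (i : Fin M) : ℝ :=
  (1 / (M : ℝ)) * ∑ k ∈ range M, ((M - 1).choose k : ℝ)⁻¹ *
    ∑ S ∈ ((univ : Finset (Fin M)).erase i).powersetCard k,
      (condSub f P xt (insert i S) - condSub f P xt S)

/-- The quadratic polynomial `f(x) = c + bᵀx + ½ xᵀA x`. -/
noncomputable def quadf {M : ℕ} (c : ℝ) (b : Fin M → ℝ) (A : Matrix (Fin M) (Fin M) ℝ)
    (x : Fin M → ℝ) : ℝ :=
  c + ∑ i : Fin M, b i * x i + (1 / 2) * ∑ i : Fin M, ∑ j : Fin M, x i * A i j * x j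

open Matrix

theorem sum_range_choose_div_choose_succ (m : ℕ) :
    ∑ k ∈ range (m + 2), (m.choose k : ℝ) / (m + 1).choose k = (m + 2) / 2 := by
  have hratio : ∀ k ∈ range (m + 2), (m.choose k : ℝ) / (m + 1).choose k = 1 - k / (m + 1) := by
    intro k hk
    have hk : k ≤ m + 1 := Nat.lt_succ_iff.1 (mem_range.1 hk)
    have hpos : ((m + 1).choose k : ℝ) ≠ 0 := by exact_mod_cast (Nat.choose_pos hk).ne'
    have hid : (m.choose k : ℝ) * (m + 1) = (m + 1).choose k * ((m + 1 : ℕ) - k : ℝ) := by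
      rw [← Nat.cast_sub hk]
      exact_mod_cast Nat.choose_mul_succ_eq m k
    field_simp
    push_cast at hid
    linarith
  have hgauss : ∑ k ∈ range (m + 2), (k : ℝ) = (m + 2) * (m + 1) / 2 := by
    have h : (∑ k ∈ range (m + 2), k) * 2 = (m + 2) * (m + 1) := sum_range_id_mul_two (m + 2)
    rw [eq_div_iff two_ne_zero, ← Nat.cast_sum]
    exact_mod_cast h
  rw [sum_congr rfl hratio, sum_sub_distrib, ← sum_div, hgauss, sum_const, card_range,
    nsmul_eq_mul]
  field_simp
  push_cast
  ring

section Shapley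

variable {ι : Type*} [Fintype ι] [DecidableEq ι]

noncomputable def shapleyAverage (i : ι) (g : Finset ι → ℝ) : ℝ :=
  (1 / (Fintype.card ι : ℝ)) * ∑ k ∈ range (Fintype.card ι),
    ((Fintype.card ι - 1).choose k : ℝ)⁻¹ * ∑ S ∈ (univ.erase i).powersetCard k, g S

theorem card_univ_erase (i : ι) : (univ.erase i).card = Fintype.card ι - 1 := by
  rw [card_erase_of_mem (mem_univ i), card_univ]

theorem shapleyAverage_congr {i : ι} {g g' : Finset ι → ℝ} (h : ∀ S, i ∉ S → g S = g' S) :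
    shapleyAverage i g = shapleyAverage i g' := by
  unfold shapleyAverage
  refine congrArg _ (sum_congr rfl fun k _ => congrArg _ (sum_congr rfl fun S hS => h S ?_))
  exact fun hi => notMem_erase i univ ((mem_powersetCard.1 hS).1 hi)

theorem shapleyAverage_sub (i : ι) (g g' : Finset ι → ℝ) :
    shapleyAverage i (fun S => g S - g' S) = shapleyAverage i g - shapleyAverage i g' := by
  simp only [shapleyAverage, sum_sub_distrib, mul_sub]

theorem shapleyAverage_sum {α : Type*} (i : ι) (s : Finset α) (g : α → Finset ι → ℝ) :
    shapleyAverage i (fun S => ∑ a ∈ s, g a S) = ∑ a ∈ s, shapleyAverage i (g a) := by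
  simp only [shapleyAverage, mul_sum]
  conv_rhs => rw [sum_comm]
  exact sum_congr rfl fun _ _ => sum_comm

theorem shapleyAverage_const (i : ι) (a : ℝ) : shapleyAverage i (fun _ => a) = a := by
  have hcard : (Fintype.card ι : ℝ) ≠ 0 := by exact_mod_cast (Fintype.card_pos_iff.2 ⟨i⟩).ne'
  have hinner : ∀ k ∈ range (Fintype.card ι),
      ((Fintype.card ι - 1).choose k : ℝ)⁻¹ * ∑ S ∈ (univ.erase i).powersetCard k, a = a := by
    intro k hk
    have hk : k ≤ Fintype.card ι - 1 := Nat.le_sub_one_of_lt (mem_range.1 hk)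
    rw [sum_const, card_powersetCard, card_univ_erase, nsmul_eq_mul,
      inv_mul_cancel_left₀ (by exact_mod_cast (Nat.choose_pos hk).ne')]
  rw [shapleyAverage, sum_congr rfl hinner, sum_const, card_range, nsmul_eq_mul,
    ← mul_assoc, one_div_mul_cancel hcard, one_mul]

theorem shapleyAverage_ite_notMem {i j : ι} (hij : j ≠ i) (a : ℝ) :
    shapleyAverage i (fun S => if j ∉ S then a else 0) = a / 2 := by
  obtain ⟨m, hm⟩ : ∃ m, Fintype.card ι = m + 2 :=
    Nat.exists_eq_add_of_le' (Fintype.one_lt_card_iff.2 ⟨i, j, hij.symm⟩)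
  have hinner : ∀ k, ∑ S ∈ (univ.erase i).powersetCard k, (if j ∉ S then a else 0)
      = m.choose k * a := by
    intro k
    have hfilter : {S ∈ (univ.erase i).powersetCard k | j ∉ S}
        = ((univ.erase i).erase j).powersetCard k := by
      ext S
      simp only [mem_filter, mem_powersetCard, subset_erase]
      tauto
    rw [← sum_filter, hfilter, sum_const, card_powersetCard, card_erase_of_mem
      (mem_erase.2 ⟨hij, mem_univ j⟩), card_univ_erase, hm, nsmul_eq_mul]
    rfl
  have hterm : ∀ k ∈ range (m + 2), ((m + 1).choose k : ℝ)⁻¹ * (m.choose k * a)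
      = m.choose k / (m + 1).choose k * a := fun k _ => by ring
  rw [shapleyAverage, hm, show m + 2 - 1 = m + 1 from rfl]
  simp only [hinner]
  rw [sum_congr rfl hterm, ← sum_mul, sum_range_choose_div_choose_succ]
  push_cast
  field_simp

end Shapley

theorem quadf_eq_dotProduct {M : ℕ} (c : ℝ) (b : Fin M → ℝ) (A : Matrix (Fin M) (Fin M) ℝ)
    (x : Fin M → ℝ) : quadf c b A x = c + b ⬝ᵥ x + 1 / 2 * (x ⬝ᵥ A *ᵥ x) := by
  simp only [quadf, dotProduct, mulVec, mul_sum, mul_assoc]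

theorem quadf_add_single {M : ℕ} (c : ℝ) (b : Fin M → ℝ) {A : Matrix (Fin M) (Fin M) ℝ}
    (hA : A.IsSymm) (u : Fin M → ℝ) (i : Fin M) (d : ℝ) :
    quadf c b A (u + Pi.single i d) - quadf c b A u
      = d * (b i + (A *ᵥ u) i) + 1 / 2 * d ^ 2 * A i i := by
  have hsymm : u ⬝ᵥ A *ᵥ Pi.single i d = d * (A *ᵥ u) i := by
    rw [dotProduct_mulVec, ← mulVec_transpose, hA.eq, dotProduct_single, mul_comm]
  have hdiag : (A *ᵥ Pi.single i d) i = A i i * d := by simp [mulVec_single]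
  simp only [quadf_eq_dotProduct, mulVec_add, dotProduct_add, add_dotProduct, hsymm,
    single_dotProduct, dotProduct_single, hdiag]
  ring

theorem subst_insert_of_notMem {M : ℕ} (xt x : Fin M → ℝ) {T : Finset (Fin M)} {i : Fin M}
    (hi : i ∉ T) :
    subst xt x (insert i T) = subst xt x T + Pi.single i (xt i - x i) := by
  ext j
  rcases eq_or_ne j i with rfl | hj
  · simp [subst, hi]
  · simp [subst, hj]

theorem subst_eq_sub {M : ℕ} (xt x : Fin M → ℝ) (T : Finset (Fin M)) :
    subst xt x T = xt - fun k => if k ∈ T then 0 else xt k - x k := by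
  ext k
  by_cases hk : k ∈ T <;> simp [subst, hk]

theorem quadf_subst_insert_sub {M : ℕ} (c : ℝ) (b : Fin M → ℝ) {A : Matrix (Fin M) (Fin M) ℝ}
    (hA : A.IsSymm) (xt x : Fin M → ℝ) {T : Finset (Fin M)} {i : Fin M} (hi : i ∉ T) :
    quadf c b A (subst xt x (insert i T)) - quadf c b A (subst xt x T)
      = (xt i - x i) * (b i + (A *ᵥ xt) i) - 1 / 2 * ((xt i - x i) * (xt i - x i) * A i i)
        - ∑ k ∈ univ.erase i with k ∉ T, (xt i - x i) * (xt k - x k) * A i k := by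
  set w : Fin M → ℝ := fun k => if k ∈ T then 0 else xt k - x k
  have hw : (A *ᵥ w) i = A i i * (xt i - x i)
      + ∑ k ∈ univ.erase i with k ∉ T, A i k * (xt k - x k) := by
    rw [mulVec, dotProduct, ← add_sum_erase _ _ (mem_univ i), sum_filter]
    simp [w, hi]
  have hfactor : ∑ k ∈ univ.erase i with k ∉ T, (xt i - x i) * (xt k - x k) * A i k
      = (xt i - x i) * ∑ k ∈ univ.erase i with k ∉ T, A i k * (xt k - x k) := by
    rw [mul_sum]
    exact sum_congr rfl fun _ _ => by ring
  rw [subst_insert_of_notMem xt x hi, quadf_add_single c b hA, subst_eq_sub, mulVec_sub,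
    Pi.sub_apply, hw, hfactor]
  ring

theorem integrable_const_sub_mul_const_sub {Ω : Type*} [MeasurableSpace Ω] {μ : Measure Ω}
    [IsFiniteMeasure μ] {f g : Ω → ℝ} (hf : Integrable f μ) (hg : Integrable g μ)
    (hfg : Integrable (fun ω => f ω * g ω) μ) (a b : ℝ) :
    Integrable (fun ω => (a - f ω) * (b - g ω)) μ := by
  have h := (((integrable_const (a * b)).sub (hg.const_mul a)).sub (hf.mul_const b)).add hfg
  exact h.congr <| Filter.Eventually.of_forall fun ω => by
    simp only [Pi.add_apply, Pi.sub_apply]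
    ring

theorem integrable_quadf_comp {Ω : Type*} [MeasurableSpace Ω] {μ : Measure Ω} [IsFiniteMeasure μ]
    {M : ℕ} (c : ℝ) (b : Fin M → ℝ) (A : Matrix (Fin M) (Fin M) ℝ) {g : Ω → Fin M → ℝ}
    (h1 : ∀ j, Integrable (fun ω => g ω j) μ) (h2 : ∀ j k, Integrable (fun ω => g ω j * g ω k) μ) :
    Integrable (fun ω => quadf c b A (g ω)) μ := by
  have hquad : ∀ j k, Integrable (fun ω => g ω j * A j k * g ω k) μ := fun j k =>
    ((h2 j k).mul_const (A j k)).congr (Filter.Eventually.of_forall fun ω => by ring)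
  exact ((integrable_const c).add (integrable_finsetSum _ fun j _ => (h1 j).const_mul (b j))).add
    ((integrable_finsetSum _ fun j _ => integrable_finsetSum _ fun k _ => hquad j k).const_mul _)

theorem integrable_subst_apply {M : ℕ} {P : Measure (Fin M → ℝ)} [IsFiniteMeasure P]
    (hmom1 : ∀ i : Fin M, Integrable (fun x : Fin M → ℝ => x i) P) (xt : Fin M → ℝ)
    (T : Finset (Fin M)) (j : Fin M) : Integrable (fun x => subst xt x T j) P := by
  by_cases hj : j ∈ T <;> simp only [subst, hj, if_true, if_false]
  exacts [integrable_const _, hmom1 j]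

theorem integrable_subst_mul_subst {M : ℕ} {P : Measure (Fin M → ℝ)} [IsFiniteMeasure P]
    (hmom1 : ∀ i : Fin M, Integrable (fun x : Fin M → ℝ => x i) P)
    (hmom2 : ∀ i j : Fin M, Integrable (fun x : Fin M → ℝ => x i * x j) P) (xt : Fin M → ℝ)
    (T : Finset (Fin M)) (j k : Fin M) :
    Integrable (fun x => subst xt x T j * subst xt x T k) P := by
  by_cases hj : j ∈ T <;> by_cases hk : k ∈ T <;> simp only [subst, hj, hk, if_true, if_false]
  exacts [integrable_const _, (hmom1 k).const_mul _, (hmom1 j).mul_const _, hmom2 j k]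

theorem condSub_quadf_insert_sub {M : ℕ} (c : ℝ) (b : Fin M → ℝ) {A : Matrix (Fin M) (Fin M) ℝ}
    (hA : A.IsSymm) {P : Measure (Fin M → ℝ)} [IsFiniteMeasure P]
    (hmom1 : ∀ i : Fin M, Integrable (fun x : Fin M → ℝ => x i) P)
    (hmom2 : ∀ i j : Fin M, Integrable (fun x : Fin M → ℝ => x i * x j) P)
    (xt : Fin M → ℝ) {T : Finset (Fin M)} {i : Fin M} (hi : i ∉ T) :
    condSub (quadf c b A) P xt (insert i T) - condSub (quadf c b A) P xt T
      = (∫ x, (xt i - x i) ∂P) * (b i + (A *ᵥ xt) i)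
        - 1 / 2 * ((∫ x, (xt i - x i) * (xt i - x i) ∂P) * A i i)
        - ∑ k ∈ univ.erase i with k ∉ T, (∫ x, (xt i - x i) * (xt k - x k) ∂P) * A i k := by
  have hquad : ∀ T, Integrable (fun x => quadf c b A (subst xt x T)) P := fun T =>
    integrable_quadf_comp c b A (integrable_subst_apply hmom1 xt T)
      (integrable_subst_mul_subst hmom1 hmom2 xt T)
  have hΔ : Integrable (fun x : Fin M → ℝ => xt i - x i) P := (integrable_const _).sub (hmom1 i)
  have hΔΔ : ∀ k, Integrable (fun x : Fin M → ℝ => (xt i - x i) * (xt k - x k)) P := fun k =>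
    integrable_const_sub_mul_const_sub (hmom1 i) (hmom1 k) (hmom2 i k) _ _
  rw [condSub, condSub, ← integral_sub (hquad _) (hquad _),
    integral_congr_ae (Filter.Eventually.of_forall fun x => quadf_subst_insert_sub c b hA xt x hi),
    integral_sub (by exact (hΔ.mul_const _).sub (((hΔΔ i).mul_const _).const_mul _))
      (integrable_finsetSum _ fun k _ => (hΔΔ k).mul_const _),
    integral_sub (hΔ.mul_const _) (((hΔΔ i).mul_const _).const_mul _),
    integral_finsetSum _ fun k _ => (hΔΔ k).mul_const _,
    integral_mul_const, integral_const_mul, integral_mul_const]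
  simp only [integral_mul_const]

theorem SV_eq_shapleyAverage {M : ℕ} (f : (Fin M → ℝ) → ℝ) (P : Measure (Fin M → ℝ))
    (xt : Fin M → ℝ) (i : Fin M) :
    SV f P xt i = shapleyAverage i fun S => condSub f P xt (insert i S) - condSub f P xt S := by
  simp only [SV, shapleyAverage, Fintype.card_fin]

/-- for a quadratic polynomial `f(x) = c + bᵀx + ½ xᵀA x` with `A` symmetric
and a probability measure `P` with finite second moments, writing `Δ = x^t − x` for `x ~ P`,
the Shapley value has the exact closed form
`SV_i(x^t) = ⟨Δ_i⟩·∂f(x^t)/∂x_i − ½ Σ_k ⟨Δ_i Δ_k⟩·A_{ik}` with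
`∂f(x^t)/∂x_i = b_i + (A x^t)_i` and `A_{ik} = ∂²f/∂x_i∂x_k`. -/
theorem sv_quadratic_closed_form {M : ℕ} (c : ℝ) (b : Fin M → ℝ)
    (A : Matrix (Fin M) (Fin M) ℝ) (hA : A.IsSymm)
    (P : Measure (Fin M → ℝ)) [IsProbabilityMeasure P]
    (hmom1 : ∀ i : Fin M, Integrable (fun x : Fin M → ℝ => x i) P)
    (hmom2 : ∀ i j : Fin M, Integrable (fun x : Fin M → ℝ => x i * x j) P)
    (xt : Fin M → ℝ) (i : Fin M) :
    SV (quadf c b A) P xt i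
      = (∫ x, (xt i - x i) ∂P) * (b i + ∑ j : Fin M, A i j * xt j)
        - (1 / 2) * ∑ k : Fin M, (∫ x, (xt i - x i) * (xt k - x k) ∂P) * A i k := by
  set E : Fin M → ℝ := fun k => (∫ x, (xt i - x i) * (xt k - x k) ∂P) * A i k
  have hmarginal : ∀ S, i ∉ S →
      condSub (quadf c b A) P xt (insert i S) - condSub (quadf c b A) P xt S
        = ((∫ x, (xt i - x i) ∂P) * (b i + (A *ᵥ xt) i) - 1 / 2 * E i)
          - ∑ k ∈ univ.erase i, if k ∉ S then E k else 0 := fun S hi => by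
    rw [condSub_quadf_insert_sub c b hA hmom1 hmom2 xt hi, ← sum_filter]
  rw [SV_eq_shapleyAverage, shapleyAverage_congr hmarginal, shapleyAverage_sub,
    shapleyAverage_const, shapleyAverage_sum,
    sum_congr rfl fun k hk => shapleyAverage_ite_notMem (ne_of_mem_erase hk) (E k),
    ← add_sum_erase univ E (mem_univ i), ← sum_div]
  simp only [mulVec, dotProduct]
  ring
end

section
/- Let f(x) = c + bᵀx + ½ xᵀA x be a quadratic polynomial on ℝ^M with A symmetric, and let P be a probability measure on ℝ^M with finite second moments. Writing Δ = x^t − x⁰ for x⁰ distributed according to P and ⟨·⟩ for expectation under P, the expected integrated gradient admits the exact closed form EIG_i(x^t) = ⟨Δ_i⟩ · ∂f(x^t)/∂x_i − ½ Σ_{j=1}^M ⟨Δ_i Δ_j⟩ · A_{ij} for every i, where ∂f(x^t)/∂x_i = b_i + (A x^t)_i and A_{ij} = ∂²f/∂x_i∂x_j. -/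
open MeasureTheory Finset

lemma hasFDerivAt_quadf {M : ℕ} (c : ℝ) (b : Fin M → ℝ) (A : Matrix (Fin M) (Fin M) ℝ)
    (x : Fin M → ℝ) :
    HasFDerivAt (quadf c b A)
      (∑ j, (b j + (1 / 2) * ∑ k, (A j k + A k j) * x k) •
        ContinuousLinearMap.proj (R := ℝ) (φ := fun _ : Fin M => ℝ) j) x := by
  have hproj (j : Fin M) := hasFDerivAt_apply (𝕜 := ℝ) j x
  have hlin := HasFDerivAt.fun_sum fun j (_ : j ∈ univ) => (hproj j).const_mul (b j)
  have hquad := HasFDerivAt.fun_sum fun j (_ : j ∈ univ) => HasFDerivAt.fun_sum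
    fun k (_ : k ∈ univ) => ((hproj j).mul_const (A j k)).mul (hproj k)
  refine (((hasFDerivAt_const c x).add hlin).add (hquad.const_mul (1 / 2))).congr_fderiv ?_
  ext v
  simp only [zero_add, one_div, sum_add_distrib, smul_add, add_apply, _root_.sum_apply, smul_apply,
    ContinuousLinearMap.proj_apply, smul_eq_mul, mul_sum, add_mul, mul_add, sum_mul, add_right_inj]
  rw [add_comm]
  congr 1
  · exact sum_congr rfl fun _ _ => sum_congr rfl fun _ _ => by ring
  · rw [sum_comm]
    exact sum_congr rfl fun _ _ => sum_congr rfl fun _ _ => by ring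

lemma partialDeriv'_quadf {M : ℕ} (c : ℝ) (b : Fin M → ℝ) {A : Matrix (Fin M) (Fin M) ℝ}
    (hA : A.IsSymm) (i : Fin M) (x : Fin M → ℝ) :
    partialDeriv' (quadf c b A) i x = b i + ∑ j, A i j * x j := by
  simp only [partialDeriv', (hasFDerivAt_quadf c b A x).fderiv, hA.apply,
    _root_.sum_apply, smul_apply, ContinuousLinearMap.proj_apply,
    Pi.single_apply, smul_eq_mul, mul_ite, mul_one, mul_zero, sum_ite_eq', mem_univ, if_true,
    ← two_mul, mul_assoc, ← mul_sum]
  ring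

lemma integral_zero_one_const_add_mul (p q : ℝ) :
    ∫ α in (0 : ℝ)..1, (p + α * q) = p + q / 2 := by
  rw [intervalIntegral.integral_add intervalIntegrable_const
      (intervalIntegral.intervalIntegrable_id.mul_const q),
    intervalIntegral.integral_const, intervalIntegral.integral_mul_const, integral_id, smul_eq_mul]
  ring

lemma IG_quadf {M : ℕ} (c : ℝ) (b : Fin M → ℝ) {A : Matrix (Fin M) (Fin M) ℝ}
    (hA : A.IsSymm) (xt x0 : Fin M → ℝ) (i : Fin M) :
    IG (quadf c b A) xt x0 i
      = (xt i - x0 i) * (b i + ∑ j, A i j * xt j)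
        - 1 / 2 * ∑ j, (xt i - x0 i) * (xt j - x0 j) * A i j := by
  set q := ∑ j, A i j * (xt j - x0 j)
  have hsegment (α : ℝ) : partialDeriv' (quadf c b A) i (x0 + α • (xt - x0))
      = (b i + ∑ j, A i j * xt j - q) + α * q := by
    simp only [partialDeriv'_quadf c b hA, q, mul_sum, add_sub_assoc, ← sum_sub_distrib,
      add_assoc, ← sum_add_distrib, Pi.add_apply, Pi.smul_apply, Pi.sub_apply, smul_eq_mul]
    exact congrArg _ (sum_congr rfl fun _ _ => by ring)
  have hsum : ∑ j, (xt i - x0 i) * (xt j - x0 j) * A i j = (xt i - x0 i) * q := by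
    rw [mul_sum]
    exact sum_congr rfl fun _ _ => by ring
  rw [IG, intervalIntegral.integral_congr fun α _ => hsegment α, integral_zero_one_const_add_mul,
    hsum]
  ring

lemma integrable_sub_mul_sub {α : Type*} [MeasurableSpace α] {μ : Measure α}
    [IsFiniteMeasure μ] {f g : α → ℝ} (hf : Integrable f μ) (hg : Integrable g μ)
    (hfg : Integrable (fun x => f x * g x) μ) (a b : ℝ) :
    Integrable (fun x => (a - f x) * (b - g x)) μ := by
  refine ((((integrable_const (a * b)).sub (hg.const_mul a)).sub (hf.mul_const b)).add hfg).congr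
    (ae_of_all _ fun x => ?_)
  simp only [Pi.add_apply, Pi.sub_apply]
  ring

/-- for a quadratic polynomial `f(x) = c + bᵀx + ½ xᵀA x` with `A` symmetric
and a probability measure `P` with finite second moments, writing `Δ = x^t − x⁰` for `x⁰ ~ P`,
the expected integrated gradient has the exact closed form
`EIG_i(x^t) = ⟨Δ_i⟩·∂f(x^t)/∂x_i − ½ Σ_j ⟨Δ_i Δ_j⟩·A_{ij}` with
`∂f(x^t)/∂x_i = b_i + (A x^t)_i`. -/
theorem eig_quadratic_closed_form {M : ℕ} (c : ℝ) (b : Fin M → ℝ)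
    (A : Matrix (Fin M) (Fin M) ℝ) (hA : A.IsSymm)
    (P : Measure (Fin M → ℝ)) [IsProbabilityMeasure P]
    (hmom1 : ∀ i : Fin M, Integrable (fun x : Fin M → ℝ => x i) P)
    (hmom2 : ∀ i j : Fin M, Integrable (fun x : Fin M → ℝ => x i * x j) P)
    (xt : Fin M → ℝ) (i : Fin M) :
    EIG (quadf c b A) P xt i
      = (∫ x0, (xt i - x0 i) ∂P) * (b i + ∑ j : Fin M, A i j * xt j)
        - (1 / 2) * ∑ j : Fin M, (∫ x0, (xt i - x0 i) * (xt j - x0 j) ∂P) * A i j := by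
  have hΔ : Integrable (fun x0 : Fin M → ℝ => xt i - x0 i) P :=
    (integrable_const _).sub (hmom1 i)
  have hΔΔ (j : Fin M) : Integrable (fun x0 : Fin M → ℝ => (xt i - x0 i) * (xt j - x0 j)) P :=
    integrable_sub_mul_sub (hmom1 i) (hmom1 j) (hmom2 i j) (xt i) (xt j)
  have hsum : Integrable (fun x0 => ∑ j, (xt i - x0 i) * (xt j - x0 j) * A i j) P :=
    integrable_finsetSum _ fun j _ => (hΔΔ j).mul_const _
  simp only [EIG, IG_quadf c b hA]
  rw [integral_sub (hΔ.mul_const _) (hsum.const_mul _), integral_mul_const, integral_const_mul,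
    integral_finsetSum _ fun j _ => (hΔΔ j).mul_const _]
  simp only [integral_mul_const]
end
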